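/- If f : R → S is a ring epimorphism and M is a pure injective S-module, then M is pure injective as an R-module. -/

import Mathlib

universe u

/-- A linear map is a pure monomorphism if it is injective and `Hom(A, −)`
preserves exactness of the associated short exact sequence for every finitely
presented module `A`. -/
def IsPureMono (R : Type u) [Ring R] {M N : Type u} [AddCommGroup M] [Module R M]
    [AddCommGroup N] [Module R N] (i : M →ₗ[R] N) : Prop :=
  Function.Injective i ∧
    ∀ (A : Type u) [AddCommGroup A] [Module R A], Module.FinitePresentation R A →
      ∀ h : A →ₗ[R] (N ⧸ LinearMap.range i),
        ∃ h' : A →ₗ[R] N, (LinearMap.range i).mkQ.comp h' = h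

/-- A module is pure injective if every pure monomorphism out of it splits. -/
def IsPureInjectiveModule (R : Type u) [Ring R] (M : Type u) [AddCommGroup M]
    [Module R M] : Prop :=
  ∀ (N : Type u) [AddCommGroup N] [Module R N] (i : M →ₗ[R] N),
    IsPureMono R i → ∃ r : N →ₗ[R] M, r.comp i = LinearMap.id

/-!
Let `i : M → N` be a pure monomorphism of `R`-modules. Purity of `i` means that every finite
system of linear equations with constants from `M` that is solvable in `N` is solvable in `M`.
This property passes to `j : M → S ⊗[R] N`, `m ↦ 1 ⊗ i m`: writing `S ⊗[R] N` as the free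
`S`-module on `N` modulo the `R`-linear relations of `N`, a solution over `S` involves only
finitely many of these relations, so it comes from a finite system over `R`. Since `f` is an
epimorphism, the `R`-linear map `j` is `S`-linear, hence an `S`-pure monomorphism, which splits
because `M` is pure injective over `S`. Composing the splitting with `n ↦ 1 ⊗ n` splits `i`.
-/

open Finsupp

theorem AddMonoidHom.map_smul_of_epi {R S : Type u} [Ring R] [Ring S] (f : R →+* S)
    (hepi : ∀ (T : Type u) [Ring T] (g h : S →+* T), g.comp f = h.comp f → g = h)
    {P Q : Type u} [AddCommGroup P] [AddCommGroup Q] [Module S P] [Module S Q]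
    (φ : P →+ Q) (hφ : ∀ (r : R) (p : P), φ (f r • p) = f r • φ p) (s : S) (p : P) :
    φ (s • p) = s • φ p := by
  -- Conjugating the action of `S` on `P × Q` by this shear gives a second ring map
  -- `S → End (P × Q)`, which agrees with the action on `R` exactly when `φ` is `R`-linear.
  let θ : (P × Q) ≃ₗ[ℤ] (P × Q) :=
    { toFun := fun x => (x.1, x.2 + φ x.1)
      invFun := fun x => (x.1, x.2 - φ x.1)
      map_add' := fun x y => by ext <;> simp only [Prod.fst_add, Prod.snd_add, map_add]; abel
      map_smul' := fun n x => by ext <;> simp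
      left_inv := fun x => by simp
      right_inv := fun x => by simp }
  let act := Module.toModuleEnd ℤ (S := S) (P × Q)
  have hconj : act = θ.conjRingEquiv.toRingHom.comp act := by
    refine hepi _ _ _ (RingHom.ext fun r => LinearMap.ext fun x => ?_)
    ext <;> simp [θ, act, hφ, smul_sub]
  have hsnd := congrArg Prod.snd (LinearMap.congr_fun (RingHom.congr_fun hconj s) (p, 0))
  exact (by simpa [θ, act, eq_neg_add_iff_add_eq] using hsnd : s • φ p = φ (s • p)).symm

theorem Finsupp.linearCombination_subtypeDomain {R α X : Type*} [Semiring R] [AddCommMonoid X]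
    [Module R X] {p : α → Prop} [DecidablePred p] (g : α → X) {l : α →₀ R}
    (hl : ∀ a ∈ l.support, p a) :
    linearCombination R (g ∘ Subtype.val) (l.subtypeDomain p) = linearCombination R g l := by
  simp only [linearCombination_apply, Function.comp_apply]
  exact sum_subtypeDomain_index (h := fun a r => r • g a) hl

theorem Finsupp.linearCombination_mapRange_of_smul_eq {R S α M : Type*} [Semiring R]
    [Semiring S] {f : R →+* S} [AddCommMonoid M] [Module R M] [Module S M]
    (hM : ∀ (r : R) (m : M), r • m = f r • m) (v : α → M) (c : α →₀ R) :
    linearCombination S v (mapRange.addMonoidHom (f : R →+ S) c) = linearCombination R v c := by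
  simp [linearCombination_apply, sum_mapRange_index, hM]

theorem Submodule.exists_finset_forall_mem_span_image {R α X ι : Type*} [Semiring R]
    [AddCommMonoid X] [Module R X] [Finite ι] (g : α → X) {s : Set α} {x : ι → X}
    (hx : ∀ t, x t ∈ span R (g '' s)) :
    ∃ D : Finset α, ↑D ⊆ s ∧ ∀ t, x t ∈ span R (g '' D) := by
  classical
  cases nonempty_fintype ι
  choose T hTs hxT using fun t => mem_span_finite_of_mem_span (hx t)
  choose D hDs hDT using fun t => Finset.subset_set_image_iff.1 (hTs t)
  refine ⟨Finset.univ.biUnion D, by simpa using hDs, fun t => span_mono ?_ (hxT t)⟩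
  rw [← hDT t, Finset.coe_image]
  exact Set.image_mono (Finset.coe_subset.2 (Finset.subset_biUnion_of_mem D (Finset.mem_univ t)))

section ExtendScalars

variable {R S : Type u} [Ring R] [Ring S] (f : R →+* S) (N : Type u) [AddCommGroup N]
  [Module R N]

/-- `ExtendScalars f N` is `S ⊗[R] N`, presented on the generators `1 ⊗ n` for `n : N`. -/
noncomputable def extendScalarsRelations : Submodule S (N →₀ S) :=
  Submodule.span S
    (mapRange.addMonoidHom (f : R →+ S) '' LinearMap.ker (linearCombination R (id : N → N)))

abbrev ExtendScalars : Type u :=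
  (N →₀ S) ⧸ extendScalarsRelations f N

variable {f N} in
theorem mk_mapRange_eq_of_linearCombination_eq {c c' : N →₀ R}
    (h : linearCombination R id c = linearCombination R id c') :
    (Submodule.Quotient.mk (mapRange.addMonoidHom (f : R →+ S) c) : ExtendScalars f N) =
      Submodule.Quotient.mk (mapRange.addMonoidHom (f : R →+ S) c') := by
  rw [Submodule.Quotient.eq, ← map_sub]
  exact Submodule.subset_span ⟨c - c', by simp [h], rfl⟩

noncomputable def extendScalarsUnit : N →+ ExtendScalars f N :=
  AddMonoidHom.mk' (fun n => Submodule.Quotient.mk (single n 1)) fun n n' => by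
    have h := mk_mapRange_eq_of_linearCombination_eq (f := f) (c := single (n + n') 1)
      (c' := single n 1 + single n' 1) (by simp)
    rw [map_add] at h
    simpa [← Submodule.Quotient.mk_add] using h

variable {f N} in
theorem extendScalarsUnit_smul (r : R) (n : N) :
    extendScalarsUnit f N (r • n) = f r • extendScalarsUnit f N n := by
  simpa [extendScalarsUnit, ← Submodule.Quotient.mk_smul] using
    mk_mapRange_eq_of_linearCombination_eq (f := f) (c := single (r • n) 1) (c' := single n r)
      (by simp)

end ExtendScalars

def ReflectsSolvability (R : Type u) [Ring R] {M N : Type u} [AddCommGroup M] [Module R M]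
    [AddCommGroup N] [Module R N] (i : M → N) : Prop :=
  ∀ (ι κ : Type u) [Finite ι] (a : ι → κ →₀ R) (m : ι → M),
    (∃ x : κ → N, ∀ t, linearCombination R x (a t) = i (m t)) →
    ∃ v : κ → M, ∀ t, linearCombination R v (a t) = m t

section Purity

variable {R : Type u} [Ring R] {M N : Type u} [AddCommGroup M] [Module R M]
  [AddCommGroup N] [Module R N] {i : M →ₗ[R] N}

theorem IsPureMono.exists_solution_of_finite (hi : IsPureMono R i)
    {ι κ : Type u} [Finite ι] [Finite κ] (a : ι → κ →₀ R) (m : ι → M) (x : κ → N)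
    (hx : ∀ t, linearCombination R x (a t) = i (m t)) :
    ∃ v : κ → M, ∀ t, linearCombination R v (a t) = m t := by
  let P := Submodule.span R (Set.range a)
  have hP : P ≤ LinearMap.ker ((LinearMap.range i).mkQ ∘ₗ linearCombination R x) := by
    refine Submodule.span_le.mpr (Set.range_subset_iff.mpr fun t => ?_)
    simp [hx]
  have : Module.FinitePresentation R ((κ →₀ R) ⧸ P) :=
    Module.finitePresentation_of_surjective P.mkQ P.mkQ_surjective
      (by rw [Submodule.ker_mkQ]; exact Submodule.fg_span (Set.finite_range a))
  obtain ⟨h, hh⟩ := hi.2 _ this (P.liftQ _ hP)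
  have hdiff : ∀ k, x k - h (P.mkQ (single k 1)) ∈ LinearMap.range i := by
    intro k
    have hk := LinearMap.congr_fun hh (P.mkQ (single k 1))
    simp only [LinearMap.comp_apply, Submodule.mkQ_apply, Submodule.liftQ_apply] at hk
    rw [← Submodule.Quotient.eq]
    simpa using hk.symm
  choose v hv using hdiff
  have hiv : i ∘ₗ linearCombination R v = linearCombination R x - h ∘ₗ P.mkQ := by
    ext k
    simp [hv]
  refine ⟨v, fun t => hi.1 ?_⟩
  have hat : P.mkQ (a t) = 0 := by
    simpa using Submodule.subset_span (Set.mem_range_self t)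
  simpa [hat, hx] using LinearMap.congr_fun hiv (a t)

theorem IsPureMono.reflectsSolvability (hi : IsPureMono R i) :
    ReflectsSolvability R i := by
  classical
  rintro ι κ _ a m ⟨x, hx⟩
  have : Fintype ι := Fintype.ofFinite ι
  let W : Finset κ := Finset.univ.biUnion fun t => (a t).support
  have hW : ∀ t, ∀ k ∈ (a t).support, k ∈ W := fun t k hk =>
    Finset.mem_biUnion.2 ⟨t, Finset.mem_univ _, hk⟩
  obtain ⟨v, hv⟩ := hi.exists_solution_of_finite (fun t => (a t).subtypeDomain (· ∈ W)) m
    (x ∘ Subtype.val) fun t => by rw [linearCombination_subtypeDomain _ (hW t), hx]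
  refine ⟨fun k => if h : k ∈ W then v ⟨k, h⟩ else 0, fun t => ?_⟩
  rw [← linearCombination_subtypeDomain _ (hW t), ← hv t]
  congr 2
  ext k
  simp

theorem ReflectsSolvability.injective (hi : ReflectsSolvability R i) :
    Function.Injective i := by
  refine (injective_iff_map_eq_zero i).2 fun m hm => ?_
  obtain ⟨v, hv⟩ := hi PUnit PUnit 0 (fun _ => m) ⟨0, fun _ => by simp [hm]⟩
  simpa using (hv PUnit.unit).symm

theorem ReflectsSolvability.isPureMono (hi : ReflectsSolvability R i) :
    IsPureMono R i := by
  refine ⟨hi.injective, fun A _ _ ⟨s, hs, T, hT⟩ h => ?_⟩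
  let π := linearCombination R ((↑) : s → A)
  have hπ : Function.Surjective π := by
    rw [← LinearMap.range_eq_top, range_linearCombination, Subtype.range_coe]
    exact hs
  choose g hg using fun u : s => (LinearMap.range i).mkQ_surjective (h (π (single u 1)))
  have hcomm : (LinearMap.range i).mkQ ∘ₗ linearCombination R g = h ∘ₗ π := by
    ext u
    simp [hg]
  have hrange (c : T) : linearCombination R g c ∈ LinearMap.range i := by
    have hc : π c = 0 := by
      rw [← LinearMap.mem_ker, ← hT]
      exact Submodule.subset_span c.2
    simpa [hc] using LinearMap.congr_fun hcomm c
  choose m hm using hrange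
  obtain ⟨v, hv⟩ := hi _ _ (fun c : T => (c : s →₀ R)) m ⟨g, fun c => (hm c).symm⟩
  let L := linearCombination R g - i ∘ₗ linearCombination R v
  have hL : LinearMap.ker π ≤ LinearMap.ker L := by
    rw [← hT, Submodule.span_le]
    intro c hc
    simp [L, ← hm ⟨c, hc⟩, hv ⟨c, hc⟩]
  refine ⟨(LinearMap.ker π).liftQ L hL ∘ₗ (π.quotKerEquivOfSurjective hπ).symm, ?_⟩
  refine (LinearMap.cancel_right hπ).1 (Eq.trans ?_ hcomm)
  ext u
  simp [L]

theorem ReflectsSolvability.extendScalars {S : Type u} [Ring S] {f : R →+* S} [Module S M]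
    (hi : ReflectsSolvability R i) (hM : ∀ (r : R) (m : M), r • m = f r • m) :
    ReflectsSolvability S fun m => extendScalarsUnit f N (i m) := by
  rintro ι κ _ b m ⟨g, hg⟩
  choose γ hγ using fun u => (extendScalarsRelations f N).mkQ_surjective (g u)
  have hrel (t : ι) :
      linearCombination S γ (b t) - single (i (m t)) 1 ∈ extendScalarsRelations f N := by
    rw [← Submodule.Quotient.eq, ← Submodule.mkQ_apply, apply_linearCombination,
      show _ ∘ γ = g from funext hγ, hg t]
    rfl
  obtain ⟨D, hD, hDt⟩ := Submodule.exists_finset_forall_mem_span_image _ hrel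
  obtain ⟨v, hv⟩ := hi _ _ (Sum.elim (fun d : D => d.1) fun t => single (i (m t)) 1)
    (Sum.elim 0 m) ⟨id, by rintro (d | t); exacts [by simpa using hD d.2, by simp]⟩
  -- `v` respects only the finitely many relations in `D`, but that is all `ψ` has to kill.
  let ψ := linearCombination S v
  have hψ : Submodule.span S (mapRange.addMonoidHom (f : R →+ S) '' D) ≤ LinearMap.ker ψ := by
    rw [Submodule.span_le]
    rintro _ ⟨d, hd, rfl⟩
    rw [SetLike.mem_coe, LinearMap.mem_ker, linearCombination_mapRange_of_smul_eq hM]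
    simpa using hv (Sum.inl ⟨d, hd⟩)
  refine ⟨ψ ∘ γ, fun t => ?_⟩
  have hvt := hv (Sum.inr t)
  simp only [Sum.elim_inr, linearCombination_single, one_smul] at hvt
  simpa [← apply_linearCombination, ψ, sub_eq_zero, hvt] using hψ (hDt t)

end Purity

/-- If `f : R → S` is a ring epimorphism and `M` is a pure injective
`S`-module, then `M` is pure injective as an `R`-module (via restriction of
scalars along `f`). -/
theorem ring_epi_pureInjective_restriction {R S : Type u} [Ring R] [Ring S]
    (f : R →+* S)
    (hepi : ∀ (T : Type u) [Ring T] (g h : S →+* T), g.comp f = h.comp f → g = h)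
    (M : Type u) [AddCommGroup M] [Module S M] [Module R M]
    (hM : ∀ (r : R) (m : M), r • m = f r • m)
    (hpi : IsPureInjectiveModule S M) :
    IsPureInjectiveModule R M := by
  intro N _ _ i hi
  let η := extendScalarsUnit f N
  let j : M →ₗ[S] ExtendScalars f N :=
    { η.comp i.toAddMonoidHom with
      map_smul' := AddMonoidHom.map_smul_of_epi f hepi _ fun r m => by
        simp [← hM, η, extendScalarsUnit_smul] }
  obtain ⟨ρ, hρ⟩ := hpi _ j (hi.reflectsSolvability.extendScalars hM).isPureMono
  refine ⟨{ toFun := fun n => ρ (η n), map_add' := by simp, map_smul' := fun r n => ?_ },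
    LinearMap.ext fun m => LinearMap.congr_fun hρ m⟩
  simp [η, extendScalarsUnit_smul, hM]
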